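/- arXiv:1103.2358 — 10 statements merged into one kernel-verified Lean document; each statement's English description precedes it below -/
import Mathlib

section
/- Let G be a group with a positive cone P, and let μ, λ ∈ G be commuting elements. Let p₁, q₁, p₂, q₂, m, n be integers with q₁ > 0, q₂ > 0, n > 0, p₁·n < m·q₁ and m·q₂ < p₂·n (i.e., p₁/q₁ < m/n < p₂/q₂). If μ^{p₁} λ^{q₁} ∈ P and μ^{p₂} λ^{q₂} ∈ P, then μ^m λ^n ∈ P. -/
/-- A positive cone of a group `G`: a subset `P` closed under multiplication such that
`G` is the disjoint union of `P`, `{1}` and `P⁻¹`. -/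
def IsPositiveCone {G : Type*} [Group G] (P : Set G) : Prop :=
  (∀ a ∈ P, ∀ b ∈ P, a * b ∈ P) ∧
  (∀ g : G, g ∈ P ∨ g = 1 ∨ g⁻¹ ∈ P) ∧
  (1 : G) ∉ P ∧
  (∀ g ∈ P, g⁻¹ ∉ P)

private lemma cone_zpow {G : Type*} [Group G] {P : Set G} (hP : IsPositiveCone P)
    {g : G} (hg : g ∈ P) {k : ℤ} (hk : 0 < k) : g ^ k ∈ P := by
  obtain ⟨j, rfl⟩ : ∃ j : ℕ, k = (j : ℤ) + 1 := ⟨(k - 1).toNat, by omega⟩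
  induction j with
  | zero => simpa using hg
  | succ i ih =>
    push_cast
    rw [show ((i:ℤ) + 1 + 1) = ((i:ℤ)+1) + 1 by ring, zpow_add_one]
    exact hP.1 _ (ih (by positivity)) _ hg

/-- If `μ, λ` commute, `p₁/q₁ < m/n < p₂/q₂` (with `q₁, q₂, n > 0`) and both
`μ^{p₁} λ^{q₁}` and `μ^{p₂} λ^{q₂}` lie in a positive cone `P`, then `μ^m λ^n ∈ P`. -/
theorem stmt4 {G : Type*} [Group G] (P : Set G) (hP : IsPositiveCone P)
    (μ lam : G) (hcomm : μ * lam = lam * μ)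
    (p₁ q₁ p₂ q₂ m n : ℤ) (hq₁ : 0 < q₁) (hq₂ : 0 < q₂) (hn : 0 < n)
    (h₁ : p₁ * n < m * q₁) (h₂ : m * q₂ < p₂ * n)
    (hmem₁ : μ ^ p₁ * lam ^ q₁ ∈ P) (hmem₂ : μ ^ p₂ * lam ^ q₂ ∈ P) :
    μ ^ m * lam ^ n ∈ P := by
  have hc : Commute μ lam := hcomm
  set a : ℤ := p₂ * n - m * q₂ with ha
  set b : ℤ := m * q₁ - p₁ * n with hb
  set k : ℤ := p₂ * q₁ - p₁ * q₂ with hk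
  have ha0 : 0 < a := by omega
  have hb0 : 0 < b := by omega
  have hk0 : 0 < k := by nlinarith
  -- the key identity
  have expand : ∀ i j t : ℤ, (μ ^ i * lam ^ j) ^ t = μ ^ (i * t) * lam ^ (j * t) := by
    intro i j t
    rw [(hc.zpow_zpow i j).mul_zpow, ← zpow_mul, ← zpow_mul]
  have key : (μ ^ m * lam ^ n) ^ k =
      (μ ^ p₁ * lam ^ q₁) ^ a * (μ ^ p₂ * lam ^ q₂) ^ b := by
    rw [expand, expand, expand]
    have swap : Commute (lam ^ (q₁ * a)) (μ ^ (p₂ * b)) := hc.symm.zpow_zpow _ _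
    rw [mul_assoc, ← mul_assoc (lam ^ (q₁ * a)), swap.eq, mul_assoc, ← zpow_add,
      ← mul_assoc, ← zpow_add]
    congr 1 <;> congr 1 <;> ring
  have hpow : (μ ^ m * lam ^ n) ^ k ∈ P := by
    rw [key]
    exact hP.1 _ (cone_zpow hP hmem₁ ha0) _ (cone_zpow hP hmem₂ hb0)
  rcases hP.2.1 (μ ^ m * lam ^ n) with h | h | h
  · exact h
  · rw [h, one_zpow] at hpow; exact absurd hpow hP.2.2.1
  · have := cone_zpow hP h hk0
    rw [inv_zpow] at this
    exact absurd this (hP.2.2.2 _ hpow)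
end

section
/- Let f : G → H be a group homomorphism, let Q' be a positive cone of the subgroup ker f, and let Q be a positive cone of H. Then the set P = Q' ∪ f⁻¹(Q) is a positive cone of G. -/
/-- A positive cone of the subgroup `N` of `G`: a subset of `N` that is a positive
cone of the group `N`. -/
def IsPositiveConeOn {G : Type*} [Group G] (N : Subgroup G) (P : Set G) : Prop :=
  (∀ g ∈ P, g ∈ N) ∧
  (∀ a ∈ P, ∀ b ∈ P, a * b ∈ P) ∧
  (∀ g ∈ N, g ∈ P ∨ g = 1 ∨ g⁻¹ ∈ P) ∧
  (1 : G) ∉ P ∧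
  (∀ g ∈ P, g⁻¹ ∉ P)

/-- If `Q'` is a positive cone of `ker f` and `Q` is a positive cone of `H`,
then `Q' ∪ f⁻¹(Q)` is a positive cone of `G`. -/
theorem stmt6 {G H : Type*} [Group G] [Group H] (f : G →* H)
    (Q' : Set G) (hQ' : IsPositiveConeOn f.ker Q')
    (Q : Set H) (hQ : IsPositiveCone Q) :
    IsPositiveCone (Q' ∪ f ⁻¹' Q) := by
  obtain ⟨hsub, hmul', htri', hone', hdisj'⟩ := hQ'
  obtain ⟨hmul, htri, hone, hdisj⟩ := hQ
  have hker : ∀ g ∈ Q', f g = 1 := fun g hg => hsub g hg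
  refine ⟨?_, ?_, ?_, ?_⟩
  · rintro a (ha | ha) b (hb | hb)
    · exact Or.inl (hmul' a ha b hb)
    · refine Or.inr ?_
      show f (a * b) ∈ Q
      rw [map_mul, hker a ha, one_mul]; exact hb
    · refine Or.inr ?_
      show f (a * b) ∈ Q
      rw [map_mul, hker b hb, mul_one]; exact ha
    · refine Or.inr ?_
      show f (a * b) ∈ Q
      rw [map_mul]; exact hmul _ ha _ hb
  · intro g
    rcases htri (f g) with h | h | h
    · exact Or.inl (Or.inr h)
    · rcases htri' g h with h' | h' | h'
      · exact Or.inl (Or.inl h')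
      · exact Or.inr (Or.inl h')
      · exact Or.inr (Or.inr (Or.inl h'))
    · refine Or.inr (Or.inr (Or.inr ?_))
      show f g⁻¹ ∈ Q
      rw [map_inv]; exact h
  · rintro (h | h)
    · exact hone' h
    · exact hone (by simpa using h)
  · rintro g (hg | hg) (hg' | hg')
    · exact hdisj' g hg hg'
    · exact hone (by simpa [hker g hg] using hg')
    · have h1 : f g = 1 := by have := hker _ hg'; rwa [map_inv, inv_eq_one] at this
      exact hone (h1 ▸ hg)
    · exact hdisj (f g) hg (by simpa using hg')
end

section
/- Let f : G → H be a group homomorphism, let Q' be a positive cone of the subgroup ker f, let Q be a positive cone of H, and let P = Q' ∪ f⁻¹(Q) be the resulting positive cone of G. Then ker f is convex with respect to P: for all g ∈ G and a, b ∈ ker f, if a⁻¹g ∈ P ∪ {1} and g⁻¹b ∈ P ∪ {1}, then g ∈ ker f. -/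
/-- With `P = Q' ∪ f⁻¹(Q)` the positive cone built from a positive cone `Q'` of
`ker f` and a positive cone `Q` of `H`, the subgroup `ker f` is convex with
respect to `P`. -/
theorem stmt7 {G H : Type*} [Group G] [Group H] (f : G →* H)
    (Q' : Set G) (hQ' : IsPositiveConeOn f.ker Q')
    (Q : Set H) (hQ : IsPositiveCone Q) :
    ∀ g a b : G, a ∈ f.ker → b ∈ f.ker →
      a⁻¹ * g ∈ (Q' ∪ f ⁻¹' Q) ∪ {1} → g⁻¹ * b ∈ (Q' ∪ f ⁻¹' Q) ∪ {1} →
      g ∈ f.ker := by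
  intro g a b ha hb h1 h2
  have ha' : f a = 1 := ha
  have hb' : f b = 1 := hb
  have key1 : ∀ x ∈ (Q' ∪ f ⁻¹' Q) ∪ {1}, f x = 1 ∨ f x ∈ Q := by
    rintro x ((hx | hx) | hx)
    · exact Or.inl (hQ'.1 x hx)
    · exact Or.inr hx
    · simp at hx; simp [hx]
  have e1 : f (a⁻¹ * g) = f g := by simp [ha']
  have e2 : f (g⁻¹ * b) = (f g)⁻¹ := by simp [hb']
  rcases key1 _ h1 with c1 | c1
  · rw [e1] at c1; exact c1
  · rcases key1 _ h2 with c2 | c2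
    · rw [e2, inv_eq_one] at c2; exact c2
    · rw [e1] at c1; rw [e2] at c2
      exact absurd c2 (hQ.2.2.2 _ c1)
end

section
/- Let P be a positive cone of the additive group ℤ × ℤ, and let (a,b) ∈ ℤ × ℤ with b > 0 and gcd(a,b) = 1. Suppose the cyclic subgroup H = { k·(a,b) : k ∈ ℤ } is convex with respect to P, i.e., whenever h₁, h₂ ∈ H and g ∈ ℤ × ℤ satisfy g − h₁ ∈ P ∪ {0} and h₂ − g ∈ P ∪ {0}, then g ∈ H. Then for any pairs (m₁, n₁) and (m₂, n₂) of integers with n₁ > 0, n₂ > 0, m₁·b − a·n₁ > 0 and m₂·b − a·n₂ > 0, one has (m₁, n₁) ∈ P if and only if (m₂, n₂) ∈ P. -/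
/-- A positive cone of the additive group `ℤ × ℤ`: a subset `P` closed under addition
such that `ℤ × ℤ` is the disjoint union of `P`, `{0}` and `−P`. -/
def IsAddPositiveCone (P : Set (ℤ × ℤ)) : Prop :=
  (∀ a ∈ P, ∀ b ∈ P, a + b ∈ P) ∧
  (∀ g : ℤ × ℤ, g ∈ P ∨ g = 0 ∨ -g ∈ P) ∧
  (0 : ℤ × ℤ) ∉ P ∧
  (∀ g ∈ P, -g ∉ P)

/-! Write `d(x) = det2 x (a,b) = x.1 * b - a * x.2`. If `u ∈ P` and `v ∉ P` had `d(u), d(v) > 0`, then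
`x = d(v) • u` and `y = d(u) • (-v)` lie in `P`, while by Cramer's rule `x + y` is an integer
multiple of `(a,b)`. So `0 < x < x + y`, and convexity of `ℤ (a,b)` forces `x ∈ ℤ (a,b)`,
i.e. `0 = d(x) = d(v) d(u)`, which is absurd. -/

namespace IsAddPositiveCone

variable {P : Set (ℤ × ℤ)}

theorem nsmul_mem (hP : IsAddPositiveCone P) {x : ℤ × ℤ} (hx : x ∈ P) {n : ℕ} (hn : n ≠ 0) :
    n • x ∈ P := by
  induction n with
  | zero => exact absurd rfl hn
  | succ n ih =>
    rcases eq_or_ne n 0 with rfl | hn'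
    · simpa using hx
    · rw [succ_nsmul]
      exact hP.1 _ (ih hn') _ hx

theorem zsmul_mem (hP : IsAddPositiveCone P) {x : ℤ × ℤ} (hx : x ∈ P) {k : ℤ} (hk : 0 < k) :
    k • x ∈ P := by
  lift k to ℕ using hk.le
  rw [natCast_zsmul]
  exact hP.nsmul_mem hx (by exact_mod_cast hk.ne')

theorem neg_mem_of_notMem (hP : IsAddPositiveCone P) {g : ℤ × ℤ} (hg : g ∉ P) (hg0 : g ≠ 0) :
    -g ∈ P :=
  ((hP.2.1 g).resolve_left hg).resolve_left hg0

end IsAddPositiveCone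

def ZMultiplesConvex (P : Set (ℤ × ℤ)) (w : ℤ × ℤ) : Prop :=
  ∀ h₁ h₂ g : ℤ × ℤ, (∃ k : ℤ, h₁ = k • w) → (∃ k : ℤ, h₂ = k • w) →
    g - h₁ ∈ P ∪ {0} → h₂ - g ∈ P ∪ {0} → ∃ k : ℤ, g = k • w

theorem ZMultiplesConvex.mem_of_add_mem {P : Set (ℤ × ℤ)} {w : ℤ × ℤ}
    (hconv : ZMultiplesConvex P w)
    {x y : ℤ × ℤ} (hx : x ∈ P) (hy : y ∈ P) (hxy : ∃ k : ℤ, x + y = k • w) :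
    ∃ k : ℤ, x = k • w :=
  hconv 0 (x + y) x ⟨0, (zero_smul ℤ w).symm⟩ hxy (by simp [hx]) (by simp [hy])

def det2 (x y : ℤ × ℤ) : ℤ := x.1 * y.2 - y.1 * x.2

theorem det2_zsmul_left (k : ℤ) (x y : ℤ × ℤ) : det2 (k • x) y = k * det2 x y := by
  simp only [det2, Prod.smul_fst, Prod.smul_snd, smul_eq_mul]
  ring

theorem det2_self (x : ℤ × ℤ) : det2 x x = 0 := by
  simp only [det2]
  ring

theorem det2_smul_add_det2_smul_neg (u v w : ℤ × ℤ) :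
    det2 v w • u + det2 u w • -v = det2 v u • w := by
  ext <;> simp only [det2, Prod.fst_add, Prod.snd_add, Prod.smul_fst, Prod.smul_snd,
    Prod.fst_neg, Prod.snd_neg, smul_eq_mul] <;> ring

theorem mem_of_mem_of_det2_pos {P : Set (ℤ × ℤ)} (hP : IsAddPositiveCone P) {w : ℤ × ℤ}
    (hconv : ZMultiplesConvex P w)
    {u v : ℤ × ℤ} (hu : 0 < det2 u w) (hv : 0 < det2 v w) (huP : u ∈ P) : v ∈ P := by
  by_contra hvP
  have hv0 : v ≠ 0 := by
    rintro rfl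
    simp [det2] at hv
  obtain ⟨k, hk⟩ := hconv.mem_of_add_mem (hP.zsmul_mem huP hv)
    (hP.zsmul_mem (hP.neg_mem_of_notMem hvP hv0) hu) ⟨_, det2_smul_add_det2_smul_neg u v w⟩
  have hzero : det2 v w * det2 u w = 0 := by
    have := congrArg (det2 · w) hk
    simpa only [det2_zsmul_left, det2_self, mul_zero] using this
  exact (mul_pos hv hu).ne' hzero

theorem stmt8_general (P : Set (ℤ × ℤ)) (hP : IsAddPositiveCone P)
    (a b : ℤ)
    (hconv : ∀ h₁ h₂ g : ℤ × ℤ, (∃ k : ℤ, h₁ = k • ((a, b) : ℤ × ℤ)) →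
      (∃ k : ℤ, h₂ = k • ((a, b) : ℤ × ℤ)) →
      g - h₁ ∈ P ∪ {0} → h₂ - g ∈ P ∪ {0} → ∃ k : ℤ, g = k • ((a, b) : ℤ × ℤ))
    (m₁ n₁ m₂ n₂ : ℤ)
    (h₁ : 0 < m₁ * b - a * n₁) (h₂ : 0 < m₂ * b - a * n₂) :
    ((m₁, n₁) : ℤ × ℤ) ∈ P ↔ ((m₂, n₂) : ℤ × ℤ) ∈ P :=
  ⟨mem_of_mem_of_det2_pos hP hconv h₁ h₂, mem_of_mem_of_det2_pos hP hconv h₂ h₁⟩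

/-- If the cyclic subgroup generated by a primitive vector `(a,b)` (with `b > 0`)
is convex with respect to a positive cone `P` of `ℤ × ℤ`, then all slopes strictly
greater than `a/b` have the same sign. -/
theorem stmt8 (P : Set (ℤ × ℤ)) (hP : IsAddPositiveCone P)
    (a b : ℤ) (hb : 0 < b) (hgcd : Int.gcd a b = 1)
    (hconv : ∀ h₁ h₂ g : ℤ × ℤ, (∃ k : ℤ, h₁ = k • ((a, b) : ℤ × ℤ)) →
      (∃ k : ℤ, h₂ = k • ((a, b) : ℤ × ℤ)) →
      g - h₁ ∈ P ∪ {0} → h₂ - g ∈ P ∪ {0} → ∃ k : ℤ, g = k • ((a, b) : ℤ × ℤ))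
    (m₁ n₁ m₂ n₂ : ℤ) (hn₁ : 0 < n₁) (hn₂ : 0 < n₂)
    (h₁ : 0 < m₁ * b - a * n₁) (h₂ : 0 < m₂ * b - a * n₂) :
    ((m₁, n₁) : ℤ × ℤ) ∈ P ↔ ((m₂, n₂) : ℤ × ℤ) ∈ P :=
  stmt8_general P hP a b hconv m₁ n₁ m₂ n₂ h₁ h₂
end

section
/- Let G be a left-orderable group and let μ, λ ∈ G be commuting elements such that μ^a λ^b = 1 implies a = b = 0 (i.e., μ and λ generate a free abelian subgroup of rank 2). Let r be a rational number and suppose the pair (μ, λ) in G is r-decayed. Let r' ≥ r be a rational with reduced form p'/q' (q' > 0, gcd(p',q') = 1), set α = μ^{p'} λ^{q'}, and let N be the normal closure of α in G. If N ∩ ⟨μ, λ⟩ equals the cyclic subgroup generated by α, then the quotient group G/N is not left-orderable. -/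
/-- For a rational `s` with reduced form `a/b` (`b > 0`), the slope element
`α_s = μ^a λ^b`. -/
def slopeElt {G : Type*} [Group G] (μ lam : G) (s : ℚ) : G :=
  μ ^ s.num * lam ^ (s.den : ℤ)

/-- The set of slopes `S_r = {α_s : s ≥ r}`. -/
def slopeSet {G : Type*} [Group G] (μ lam : G) (r : ℚ) : Set G :=
  {g | ∃ s : ℚ, r ≤ s ∧ g = slopeElt μ lam s}

/-- The pair `(μ, λ)` is `r`-decayed: for every positive cone `P`,
either `S_r ⊆ P` or `S_r ∩ P = ∅`. -/
def Decayed {G : Type*} [Group G] (μ lam : G) (r : ℚ) : Prop :=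
  ∀ P : Set G, IsPositiveCone P → slopeSet μ lam r ⊆ P ∨ slopeSet μ lam r ∩ P = ∅

/-- The inverse of a positive cone is a positive cone. -/
lemma isPositiveCone_inv {G : Type*} [Group G] {P : Set G} (h : IsPositiveCone P) :
    IsPositiveCone {g : G | g⁻¹ ∈ P} := by
  obtain ⟨hmul, htri, hone, hdisj⟩ := h
  refine ⟨?_, ?_, ?_, ?_⟩
  · intro a ha b hb
    have := hmul _ hb _ ha
    simpa [mul_inv_rev] using this
  · intro g
    rcases htri g with hg | hg | hg
    · right; right; simpa using hg
    · right; left; exact hg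
    · left; exact hg
  · simpa using hone
  · intro g hg hg'
    exact hdisj _ hg (by simpa using hg')

/-- Combining a positive cone on `G ⧸ N` with a positive cone on `G` restricted to `N`. -/
lemma isPositiveCone_combine {G : Type*} [Group G] (N : Subgroup G) [N.Normal]
    {P : Set G} (hP : IsPositiveCone P)
    {Pb : Set (G ⧸ N)} (hPb : IsPositiveCone Pb) :
    IsPositiveCone {g : G | ((g : G ⧸ N) ∈ Pb) ∨ (g ∈ N ∧ g ∈ P)} := by
  obtain ⟨hmul, htri, hone, hdisj⟩ := hP
  obtain ⟨hmulb, htrib, honeb, hdisjb⟩ := hPb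
  have hcast : ∀ g : G, ((g : G ⧸ N) = 1) ↔ g ∈ N := fun g => QuotientGroup.eq_one_iff g
  refine ⟨?_, ?_, ?_, ?_⟩
  · rintro a (ha | ⟨haN, haP⟩) b (hb | ⟨hbN, hbP⟩)
    · left
      have : ((a * b : G) : G ⧸ N) = (a : G ⧸ N) * (b : G ⧸ N) := rfl
      rw [this]; exact hmulb _ ha _ hb
    · left
      have : ((a * b : G) : G ⧸ N) = (a : G ⧸ N) * (b : G ⧸ N) := rfl
      rw [this, (hcast b).2 hbN, mul_one]; exact ha
    · left
      have : ((a * b : G) : G ⧸ N) = (a : G ⧸ N) * (b : G ⧸ N) := rfl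
      rw [this, (hcast a).2 haN, one_mul]; exact hb
    · right; exact ⟨mul_mem haN hbN, hmul _ haP _ hbP⟩
  · intro g
    rcases htrib ((g : G) : G ⧸ N) with hg | hg | hg
    · left; left; exact hg
    · have hgN : g ∈ N := (hcast g).1 hg
      rcases htri g with h | h | h
      · left; right; exact ⟨hgN, h⟩
      · right; left; exact h
      · right; right; right; exact ⟨inv_mem hgN, h⟩
    · right; right; left
      have : ((g⁻¹ : G) : G ⧸ N) = ((g : G) : G ⧸ N)⁻¹ := rfl
      rw [this]; exact hg
  · rintro (h | ⟨-, h⟩)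
    · exact honeb (by simpa using h)
    · exact hone h
  · rintro g (hg | ⟨hgN, hgP⟩) (hg' | ⟨hgN', hgP'⟩)
    · exact hdisjb _ hg hg'
    · have : (g : G ⧸ N) = 1 := (hcast g).2 (by simpa using inv_mem hgN')
      rw [this] at hg; exact honeb hg
    · have : ((g⁻¹ : G) : G ⧸ N) = 1 := (hcast _).2 (inv_mem hgN)
      rw [this] at hg'; exact honeb hg'
    · exact hdisj _ hgP hgP'

/-- Injectivity of exponents. -/
lemma exps_eq {G : Type*} [Group G] {μ lam : G}
    (hfree : ∀ a b : ℤ, μ ^ a * lam ^ b = 1 → a = 0 ∧ b = 0)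
    {a b c d : ℤ} (h : μ ^ a * lam ^ b = μ ^ c * lam ^ d) : a = c ∧ b = d := by
  have h2 : μ ^ (a - c) * lam ^ (b - d) = 1 := by
    have : μ ^ (-c) * (μ ^ a * lam ^ b) * lam ^ (-d)
        = μ ^ (-c) * (μ ^ c * lam ^ d) * lam ^ (-d) := by rw [h]
    calc μ ^ (a - c) * lam ^ (b - d)
        = μ ^ (-c + a) * lam ^ (b + -d) := by ring_nf
      _ = μ ^ (-c) * (μ ^ a * lam ^ b) * lam ^ (-d) := by
          rw [zpow_add, zpow_add]; group
      _ = μ ^ (-c) * (μ ^ c * lam ^ d) * lam ^ (-d) := this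
      _ = 1 := by group
  obtain ⟨h1, h2⟩ := hfree _ _ h2
  constructor <;> omega

/-- If `(μ, λ)` is `r`-decayed in a left-orderable group `G` with `μ, λ` generating a
free abelian group of rank 2, `r' ≥ r` with `α = α_{r'}`, and the normal closure `N`
of `α` meets `⟨μ, λ⟩` exactly in `⟨α⟩`, then `G / N` is not left-orderable. -/
theorem stmt9 {G : Type*} [Group G] (μ lam : G) (hcomm : μ * lam = lam * μ)
    (hfree : ∀ a b : ℤ, μ ^ a * lam ^ b = 1 → a = 0 ∧ b = 0)
    (hLO : ∃ P : Set G, IsPositiveCone P)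
    (r : ℚ) (hdec : Decayed μ lam r) (r' : ℚ) (hr' : r ≤ r')
    (hint : Subgroup.normalClosure {slopeElt μ lam r'} ⊓ Subgroup.closure {μ, lam}
      = Subgroup.zpowers (slopeElt μ lam r')) :
    ¬ ∃ P : Set (G ⧸ Subgroup.normalClosure {slopeElt μ lam r'}), IsPositiveCone P := by
  intro hcon
  obtain ⟨P, hP⟩ := hLO
  set N := Subgroup.normalClosure {slopeElt μ lam r'} with hNdef
  set α := slopeElt μ lam r' with hαdef
  obtain ⟨Pb, hPb⟩ := hcon
  have hc : Commute μ lam := hcomm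
  -- α is in N
  have hαN : α ∈ N := Subgroup.subset_normalClosure rfl
  have hπα : ((α : G) : G ⧸ N) = 1 := (QuotientGroup.eq_one_iff α).2 hαN
  -- α is in the slope set
  have hαS : α ∈ slopeSet μ lam r := ⟨r', hr', rfl⟩
  -- α ≠ 1
  have hq'pos : (0 : ℤ) < (r'.den : ℤ) := by exact_mod_cast r'.pos
  have hα1 : α ≠ 1 := by
    intro h
    have := (hfree _ _ h).2
    omega
  -- the auxiliary slope element β of slope r' + 1, not in N
  set β := slopeElt μ lam (r' + 1) with hβdef
  have hβS : β ∈ slopeSet μ lam r := ⟨r' + 1, by linarith, rfl⟩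
  have hβN : β ∉ N := by
    intro hmem
    have hβcl : β ∈ Subgroup.closure ({μ, lam} : Set G) := by
      have hμ : μ ∈ Subgroup.closure ({μ, lam} : Set G) :=
        Subgroup.subset_closure (by simp)
      have hlam : lam ∈ Subgroup.closure ({μ, lam} : Set G) :=
        Subgroup.subset_closure (by simp)
      exact mul_mem (zpow_mem hμ _) (zpow_mem hlam _)
    have : β ∈ Subgroup.zpowers α := by
      rw [← hint]; exact ⟨hmem, hβcl⟩
    obtain ⟨k, hk⟩ := Subgroup.mem_zpowers_iff.1 this
    have hαk : α ^ k = μ ^ (r'.num * k) * lam ^ ((r'.den : ℤ) * k) := by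
      rw [hαdef, slopeElt, (hc.zpow_zpow _ _).mul_zpow, ← zpow_mul, ← zpow_mul]
    rw [hαk, hβdef, slopeElt] at hk
    obtain ⟨hnum, hden⟩ := exps_eq hfree hk
    -- k divides both num and den of r' + 1, which are coprime, and den > 0, so k = 1
    have hcop : ((r' + 1).num.natAbs).Coprime ((r' + 1).den) := (r' + 1).reduced
    have hk1 : k.natAbs ∣ (r' + 1).num.natAbs := by
      exact Int.natAbs_dvd_natAbs.2 ⟨r'.num, by rw [← hnum]; ring⟩
    have hk2 : k.natAbs ∣ (r' + 1).den := by
      have h3 : (k : ℤ) ∣ ((r' + 1).den : ℤ) := ⟨(r'.den : ℤ), by rw [← hden]; ring⟩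
      have := Int.natAbs_dvd_natAbs.2 h3
      simpa using this
    have hkabs : k.natAbs = 1 := Nat.eq_one_of_dvd_coprimes hcop hk1 hk2
    have hdenpos : (0 : ℤ) < ((r' + 1).den : ℤ) := by exact_mod_cast (r' + 1).pos
    have hkpos : 0 < k := by
      rcases Int.natAbs_eq k with h | h <;> nlinarith
    have hkone : k = 1 := by omega
    rw [hkone] at hnum hden
    have : (r' + 1) = r' := Rat.ext (by omega) (by omega)
    simp at this
  have hπβ : ∀ (Q : Set (G ⧸ N)), β ∈ {g : G | ((g : G ⧸ N) ∈ Q) ∨ (g ∈ N ∧ g ∈ P)} ↔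
      ((β : G) : G ⧸ N) ∈ Q := by
    intro Q
    constructor
    · rintro (h | ⟨h, -⟩); · exact h
      · exact absurd h hβN
    · intro h; exact Or.inl h
  -- the two combined cones
  set Pinv : Set G := {g : G | g⁻¹ ∈ P} with hPinvdef
  have hPinv : IsPositiveCone Pinv := isPositiveCone_inv hP
  set P1 : Set G := {g : G | ((g : G ⧸ N) ∈ Pb) ∨ (g ∈ N ∧ g ∈ P)} with hP1def
  set P2 : Set G := {g : G | ((g : G ⧸ N) ∈ Pb) ∨ (g ∈ N ∧ g ∈ Pinv)} with hP2def
  have hP1c : IsPositiveCone P1 := isPositiveCone_combine N hP hPb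
  have hP2c : IsPositiveCone P2 := isPositiveCone_combine N hPinv hPb
  have hαP1 : α ∈ P1 ↔ α ∈ P := by
    constructor
    · rintro (h | ⟨-, h⟩)
      · rw [hπα] at h; exact absurd h hPb.2.2.1
      · exact h
    · intro h; exact Or.inr ⟨hαN, h⟩
  have hαP2 : α ∈ P2 ↔ α⁻¹ ∈ P := by
    constructor
    · rintro (h | ⟨-, h⟩)
      · rw [hπα] at h; exact absurd h hPb.2.2.1
      · exact h
    · intro h; exact Or.inr ⟨hαN, h⟩
  have hβP1 : β ∈ P1 ↔ ((β : G) : G ⧸ N) ∈ Pb := by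
    constructor
    · rintro (h | ⟨h, -⟩); · exact h
      · exact absurd h hβN
    · intro h; exact Or.inl h
  have hβP2 : β ∈ P2 ↔ ((β : G) : G ⧸ N) ∈ Pb := by
    constructor
    · rintro (h | ⟨h, -⟩); · exact h
      · exact absurd h hβN
    · intro h; exact Or.inl h
  rcases hdec P1 hP1c with h1 | h1
  · -- S_r ⊆ P1 : α ∈ P, and β ∈ P1 forces S_r ⊆ P2 hence α⁻¹ ∈ P
    have hαP : α ∈ P := hαP1.1 (h1 hαS)
    have hβb : ((β : G) : G ⧸ N) ∈ Pb := hβP1.1 (h1 hβS)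
    rcases hdec P2 hP2c with h2 | h2
    · have : α⁻¹ ∈ P := hαP2.1 (h2 hαS)
      exact hP.2.2.2 _ hαP this
    · have : β ∈ slopeSet μ lam r ∩ P2 := ⟨hβS, hβP2.2 hβb⟩
      rw [h2] at this; exact this
  · -- S_r ∩ P1 = ∅ : α ∉ P1 so α⁻¹ ∈ P; β ∉ P1 forces S_r ∩ P2 = ∅ hence α ∈ P
    have hαnP1 : α ∉ P1 := fun h => Set.eq_empty_iff_forall_notMem.1 h1 α ⟨hαS, h⟩
    have hβnP1 : β ∉ P1 := fun h => Set.eq_empty_iff_forall_notMem.1 h1 β ⟨hβS, h⟩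
    have hαinvP : α⁻¹ ∈ P := by
      rcases hP1c.2.1 α with h | h | h
      · exact absurd h hαnP1
      · exact absurd h hα1
      · rcases h with h | ⟨-, h⟩
        · have : ((α⁻¹ : G) : G ⧸ N) = 1 := (QuotientGroup.eq_one_iff _).2 (inv_mem hαN)
          rw [this] at h; exact absurd h hPb.2.2.1
        · exact h
    rcases hdec P2 hP2c with h2 | h2
    · have : ((β : G) : G ⧸ N) ∈ Pb := hβP2.1 (h2 hβS)
      exact hβnP1 (hβP1.2 this)
    · have hαnP2 : α ∉ P2 := fun h => Set.eq_empty_iff_forall_notMem.1 h2 α ⟨hαS, h⟩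
      have hαP : α ∈ P := by
        rcases hP2c.2.1 α with h | h | h
        · exact absurd h hαnP2
        · exact absurd h hα1
        · rcases h with h | ⟨-, h⟩
          · have : ((α⁻¹ : G) : G ⧸ N) = 1 := (QuotientGroup.eq_one_iff _).2 (inv_mem hαN)
            rw [this] at h; exact absurd h hPb.2.2.1
          · have h' : α⁻¹⁻¹ ∈ P := h
            simpa using h'
      exact hP.2.2.2 _ hαP hαinvP
end

section
/- Let G be a group and let μ, λ, t ∈ G satisfy μλ = λμ and t^p = μ^q λ^p, where p, q, u, v are integers with p ≥ 1 and pu − qv = 1. Then for every integer k, ((μ^{−k} t^{−v} μ^k)^{p−1} (μ^u λ^v)^{p−1})^{−1} = μ^{−(k+1)} (μ^u λ^v t^{−v}) μ^k. -/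
/-- If `μλ = λμ`, `t^p = μ^q λ^p`, `p ≥ 1` and `pu − qv = 1`, then for every integer `k`,
`((μ^{−k} t^{−v} μ^k)^{p−1} (μ^u λ^v)^{p−1})⁻¹ = μ^{−(k+1)} (μ^u λ^v t^{−v}) μ^k`. -/
theorem stmt11 {G : Type*} [Group G] (μ lam t : G) (hcomm : μ * lam = lam * μ)
    (p q u v : ℤ) (hp : 1 ≤ p) (huv : p * u - q * v = 1)
    (ht : t ^ p = μ ^ q * lam ^ p) (k : ℤ) :
    ((μ ^ (-k) * t ^ (-v) * μ ^ k) ^ (p - 1) * (μ ^ u * lam ^ v) ^ (p - 1))⁻¹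
      = μ ^ (-(k + 1)) * (μ ^ u * lam ^ v * t ^ (-v)) * μ ^ k := by
  have c : Commute μ lam := hcomm
  have h1 : (μ ^ (-k) * t ^ (-v) * μ ^ k) ^ (p - 1)
      = μ ^ (-k) * t ^ (-v * (p - 1)) * μ ^ k := by
    have e : μ ^ k = (μ ^ (-k))⁻¹ := by rw [← zpow_neg, neg_neg]
    rw [e, conj_zpow, ← zpow_mul]
  have h2 : (μ ^ u * lam ^ v) ^ (p - 1) = μ ^ (u * (p - 1)) * lam ^ (v * (p - 1)) := by
    rw [(c.zpow_zpow u v).mul_zpow, ← zpow_mul, ← zpow_mul]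
  have h3 : t ^ (v * (p - 1)) = μ ^ (q * v) * lam ^ (p * v) * t ^ (-v) := by
    have e : v * (p - 1) = p * v + -v := by ring
    rw [e, zpow_add, zpow_mul, ht, (c.zpow_zpow q p).mul_zpow, ← zpow_mul, ← zpow_mul]
  rw [h1, h2]
  calc ((μ ^ (-k) * t ^ (-v * (p - 1)) * μ ^ k) * (μ ^ (u * (p - 1)) * lam ^ (v * (p - 1))))⁻¹
      = lam ^ (-(v * (p - 1))) * μ ^ (-(u * (p - 1))) * μ ^ (-k) * t ^ (v * (p - 1)) * μ ^ k := by
        group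
    _ = lam ^ (-(v * (p - 1))) * μ ^ (-(u * (p - 1))) * μ ^ (-k)
          * (μ ^ (q * v) * lam ^ (p * v) * t ^ (-v)) * μ ^ k := by rw [h3]
    _ = lam ^ (-(v * (p - 1))) * μ ^ (-(u * (p - 1)) + -k + q * v)
          * lam ^ (p * v) * t ^ (-v) * μ ^ k := by group
    _ = μ ^ (-(u * (p - 1)) + -k + q * v) * lam ^ (-(v * (p - 1)))
          * lam ^ (p * v) * t ^ (-v) * μ ^ k := by
        rw [(c.symm.zpow_zpow (-(v * (p - 1))) (-(u * (p - 1)) + -k + q * v)).eq]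
    _ = μ ^ (-(u * (p - 1)) + -k + q * v) * lam ^ (-(v * (p - 1)) + p * v) * t ^ (-v) * μ ^ k := by
        rw [mul_assoc (μ ^ _), ← zpow_add]
    _ = μ ^ (-(k + 1) + u) * lam ^ v * t ^ (-v) * μ ^ k := by
        have hE : -(u * (p - 1)) + -k + q * v = -(k + 1) + u := by linear_combination -huv
        have hF : -(v * (p - 1)) + p * v = v := by ring
        rw [hE, hF]
    _ = μ ^ (-(k + 1)) * (μ ^ u * lam ^ v * t ^ (-v)) * μ ^ k := by
        rw [zpow_add]; group
end

section
/- Assume the cable setup. If μ^{−(k+1)} μ_C μ^k ∈ P for every natural number k ≥ 0, then μ_C^{N+pq} λ_C ∈ P for every natural number N ≥ 0. -/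
/-- The cable meridian `μ_C = μ^u λ^v t^{−v}`. -/
def cableMu {G : Type*} [Group G] (μ lam t : G) (u v : ℤ) : G :=
  μ ^ u * lam ^ v * t ^ (-v)

/-- The cable longitude `λ_C = μ_C^{−pq} t^p`. -/
def cableLam {G : Type*} [Group G] (μ lam t : G) (p q u v : ℤ) : G :=
  (cableMu μ lam t u v) ^ (-(p * q)) * t ^ p

/-- Cable setup: if `μ^{−(k+1)} μ_C μ^k ∈ P` for every natural `k`, then
`μ_C^{N+pq} λ_C ∈ P` for every natural `N`. -/
theorem stmt13 {G : Type*} [Group G] (P : Set G) (hP : IsPositiveCone P)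
    (p q u v : ℤ) (hp : 0 < p) (hq : 0 < q) (hcop : IsCoprime p q)
    (hu : 0 < u) (hv : 0 < v) (huv : p * u - q * v = 1)
    (μ lam t : G) (hcomm : μ * lam = lam * μ) (ht : t ^ p = μ ^ q * lam ^ p)
    (r : ℚ) (hr : 0 < r) (hqp : r < (q : ℚ) / (p : ℚ))
    (hslopes : ∀ m n : ℤ, 0 < n → r < (m : ℚ) / (n : ℚ) → μ ^ m * lam ^ n ∈ P)
    (hyp : ∀ k : ℕ, μ ^ (-((k : ℤ) + 1)) * cableMu μ lam t u v * μ ^ (k : ℤ) ∈ P) :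
    ∀ N : ℕ, (cableMu μ lam t u v) ^ ((N : ℤ) + p * q) * cableLam μ lam t p q u v ∈ P := by
  intro N
  set μC := cableMu μ lam t u v with hμC
  have hC : Commute μ lam := hcomm
  have hp' : (0 : ℚ) < (p : ℚ) := by exact_mod_cast hp
  have h1 : Commute (t ^ p) μ := by
    rw [ht]; exact ((Commute.refl μ).zpow_left q).mul_left (hC.symm.zpow_left p)
  have h2 : Commute (t ^ p) lam := by
    rw [ht]; exact (hC.zpow_left q).mul_left ((Commute.refl lam).zpow_left p)
  have h3 : Commute (t ^ p) (t ^ (-v)) := ((Commute.refl t).zpow_left p).zpow_right (-v)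
  have hCμC : Commute (t ^ p) μC := by
    rw [hμC]; unfold cableMu
    exact ((h1.zpow_right u).mul_right (h2.zpow_right v)).mul_right h3
  -- key identity
  have key : ∀ M : ℤ, μ ^ (M + q) * lam ^ p * (μ ^ (-M) * μC ^ M) = μC ^ M * t ^ p := by
    intro M
    have e1 : μ ^ (M + q) * lam ^ p * μ ^ (-M) = t ^ p := by
      rw [zpow_add, mul_assoc (μ ^ M), ← ht, ← (h1.zpow_right M).eq, mul_assoc,
        ← zpow_add, add_neg_cancel, zpow_zero, mul_one]
    calc μ ^ (M + q) * lam ^ p * (μ ^ (-M) * μC ^ M)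
        = (μ ^ (M + q) * lam ^ p * μ ^ (-M)) * μC ^ M := by simp only [mul_assoc]
      _ = t ^ p * μC ^ M := by rw [e1]
      _ = μC ^ M * t ^ p := (hCμC.zpow_right M).eq
  -- telescoping product
  have ha : ∀ k : ℕ, μ ^ (-((k : ℤ) + 1)) * μC ^ ((k : ℤ) + 1) ∈ P := by
    intro k
    induction k with
    | zero => simpa using hyp 0
    | succ n ih =>
        have h := hP.1 _ (hyp (n + 1)) _ ih
        have heq : μ ^ (-(((n + 1 : ℕ) : ℤ) + 1)) * μC * μ ^ ((n + 1 : ℕ) : ℤ) *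
            (μ ^ (-((n : ℤ) + 1)) * μC ^ ((n : ℤ) + 1)) =
            μ ^ (-(((n + 1 : ℕ) : ℤ) + 1)) * μC ^ (((n + 1 : ℕ) : ℤ) + 1) := by
          push_cast
          group
        exact heq ▸ h
  -- reduce the goal
  have hgoal : μC ^ ((N : ℤ) + p * q) * cableLam μ lam t p q u v = μC ^ (N : ℤ) * t ^ p := by
    unfold cableLam
    rw [← hμC, ← mul_assoc, ← zpow_add, add_neg_cancel_right]
  rw [hgoal, ← key (N : ℤ)]
  cases N with
  | zero =>
      simp only [Nat.cast_zero, neg_zero, zpow_zero, zero_add, one_mul, mul_one]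
      exact hslopes q p hp hqp
  | succ n =>
      apply hP.1
      · apply hslopes _ p hp
        push_cast
        rw [lt_div_iff₀ hp']
        rw [lt_div_iff₀ hp'] at hqp
        have hn : (0 : ℚ) ≤ (n : ℚ) := Nat.cast_nonneg n
        nlinarith
      · have h := ha n
        have hc : ((n : ℤ) + 1) = ((n + 1 : ℕ) : ℤ) := by push_cast; ring
        rw [hc] at h
        exact h
end

section
/- Assume the cable setup. If there exists a natural number k ≥ 0 such that μ^{−k} (t^{−v} μ^u λ^v) μ^k ∈ P, then there exists a positive integer s such that μ_C^{N+pqs} λ_C^{s} ∈ P for every natural number N ≥ 0. -/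
/-- Products of elements of a cone stay in the cone; positive powers too. -/
lemma cone_pow_mem {G : Type*} [Group G] {P : Set G}
    (hmul : ∀ a ∈ P, ∀ b ∈ P, a * b ∈ P) {b : G} (hb : b ∈ P) :
    ∀ n : ℕ, 0 < n → b ^ n ∈ P := by
  intro n hn
  induction n with
  | zero => omega
  | succ m ih =>
    rcases Nat.eq_zero_or_pos m with hm | hm
    · simpa [hm] using hb
    · rw [pow_succ]
      exact hmul _ (ih hm) _ hb

/-- Merging commuting power products. -/
lemma merge_pows {G : Type*} [Group G] {μ lam : G} (h : Commute μ lam)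
    (a b c d : ℤ) : (μ ^ a * lam ^ b) * (μ ^ c * lam ^ d) = μ ^ (a + c) * lam ^ (b + d) := by
  have hbc : lam ^ b * μ ^ c = μ ^ c * lam ^ b := ((h.symm).zpow_zpow b c).eq
  calc (μ ^ a * lam ^ b) * (μ ^ c * lam ^ d)
      = μ ^ a * (lam ^ b * μ ^ c) * lam ^ d := by group
    _ = μ ^ a * (μ ^ c * lam ^ b) * lam ^ d := by rw [hbc]
    _ = (μ ^ a * μ ^ c) * (lam ^ b * lam ^ d) := by group
    _ = μ ^ (a + c) * lam ^ (b + d) := by rw [← zpow_add, ← zpow_add]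

/-- Cable setup: if `μ^{−k} (t^{−v} μ^u λ^v) μ^k ∈ P` for some natural `k`, then there is
a positive integer `s` with `μ_C^{N+pqs} λ_C^s ∈ P` for every natural `N`. -/
theorem stmt14 {G : Type*} [Group G] (P : Set G) (hP : IsPositiveCone P)
    (p q u v : ℤ) (hp : 0 < p) (hq : 0 < q) (hcop : IsCoprime p q)
    (hu : 0 < u) (hv : 0 < v) (huv : p * u - q * v = 1)
    (μ lam t : G) (hcomm : μ * lam = lam * μ) (ht : t ^ p = μ ^ q * lam ^ p)
    (r : ℚ) (hr : 0 < r) (hqp : r < (q : ℚ) / (p : ℚ))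
    (hslopes : ∀ m n : ℤ, 0 < n → r < (m : ℚ) / (n : ℚ) → μ ^ m * lam ^ n ∈ P)
    (hyp : ∃ k : ℕ, μ ^ (-(k : ℤ)) * (t ^ (-v) * μ ^ u * lam ^ v) * μ ^ (k : ℤ) ∈ P) :
    ∃ s : ℤ, 0 < s ∧ ∀ N : ℕ,
      (cableMu μ lam t u v) ^ ((N : ℤ) + p * q * s) * (cableLam μ lam t p q u v) ^ s ∈ P := by
  obtain ⟨hmul, -, -, -⟩ := hP
  obtain ⟨k, hk⟩ := hyp
  set k' : ℤ := (k : ℤ) with hk'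
  have hk'0 : 0 ≤ k' := Int.ofNat_nonneg k
  -- commuting facts
  have h1 : Commute μ lam := hcomm
  have hcμ : Commute (t ^ p) μ := by
    rw [ht]
    exact Commute.mul_left ((Commute.refl μ).zpow_left q) ((h1.symm).zpow_left p)
  have hclam : Commute (t ^ p) lam := by
    rw [ht]
    exact Commute.mul_left (h1.zpow_left q) ((Commute.refl lam).zpow_left p)
  have hct : Commute (t ^ p) t := (Commute.refl t).zpow_left p
  have hcM : Commute (t ^ p) (cableMu μ lam t u v) := by
    unfold cableMu
    exact Commute.mul_right (Commute.mul_right (hcμ.zpow_right u) (hclam.zpow_right v))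
      (hct.zpow_right (-v))
  -- rationals: pick w and d
  set ε : ℚ := (q : ℚ) - r * p with hε
  have hp' : (0 : ℚ) < (p : ℚ) := by exact_mod_cast hp
  have hεpos : 0 < ε := by
    rw [hε]
    have := (lt_div_iff₀ hp').mp hqp
    linarith
  obtain ⟨w₀, hw₀⟩ := exists_nat_gt ((r * v) / ε)
  obtain ⟨d₀, hd₀⟩ := exists_nat_gt (max (((u : ℚ) + k' - r * v) / ε) ((v : ℚ) / p))
  set w : ℤ := (w₀ : ℤ) with hwdef
  set d : ℤ := (d₀ : ℤ) with hddef
  have hwQ : r * v < (w : ℚ) * ε := by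
    have : (r * v) / ε < (w₀ : ℚ) := hw₀
    have := (div_lt_iff₀ hεpos).mp this
    push_cast [hwdef]
    linarith
  have hdQ1 : (u : ℚ) + k' - r * v < (d : ℚ) * ε := by
    have h2 : ((u : ℚ) + k' - r * v) / ε < (d₀ : ℚ) := lt_of_le_of_lt (le_max_left _ _) hd₀
    have := (div_lt_iff₀ hεpos).mp h2
    push_cast [hddef]
    linarith
  have hdQ2 : (v : ℚ) < (d : ℚ) * p := by
    have h2 : ((v : ℚ) / p) < (d₀ : ℚ) := lt_of_le_of_lt (le_max_right _ _) hd₀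
    have := (div_lt_iff₀ hp').mp h2
    push_cast [hddef]
    linarith
  have hw0 : (0 : ℤ) ≤ w := Int.ofNat_nonneg w₀
  have hd0 : (0 : ℤ) < d := by
    have hv' : (0 : ℚ) < (v : ℚ) := by exact_mod_cast hv
    have : (0 : ℚ) < (d : ℚ) := by nlinarith
    exact_mod_cast this
  have hu' : (0 : ℚ) ≤ (u : ℚ) := by exact_mod_cast hu.le
  have hk'Q : (0 : ℚ) ≤ (k' : ℚ) := by exact_mod_cast hk'0
  have hq' : (0 : ℚ) < (q : ℚ) := by exact_mod_cast hq
  have hv' : (0 : ℚ) < (v : ℚ) := by exact_mod_cast hv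
  have hr' := hr
  -- the two slope memberships
  have hXpos : (0 : ℤ) < p * w + v := by nlinarith
  have hX : μ ^ (q * w + (u + k')) * lam ^ (p * w + v) ∈ P := by
    apply hslopes _ _ hXpos
    rw [lt_div_iff₀ (by exact_mod_cast hXpos)]
    have hwQ' : (0 : ℚ) ≤ (w : ℚ) := by exact_mod_cast hw0
    push_cast
    nlinarith [hwQ]
  have hYpos : (0 : ℤ) < p * d - v := by
    have : (v : ℚ) < (d : ℚ) * p := hdQ2
    have : ((p * d - v : ℤ) : ℚ) > 0 := by push_cast; linarith
    exact_mod_cast this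
  have hY : μ ^ (q * d - (u + k')) * lam ^ (p * d - v) ∈ P := by
    apply hslopes _ _ hYpos
    rw [lt_div_iff₀ (by exact_mod_cast hYpos)]
    push_cast
    nlinarith [hdQ1]
  -- the element b
  set b : G := μ ^ (-k') * (t ^ (-v) * μ ^ u * lam ^ v) * μ ^ k' with hbdef
  have hb : b ∈ P := hk
  set g : G := μ ^ u * lam ^ v * μ ^ k' with hgdef
  have hMconj : cableMu μ lam t u v = g * b * g⁻¹ := by
    rw [hgdef, hbdef]; unfold cableMu; group
  refine ⟨w + d, by omega, ?_⟩
  intro N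
  -- key algebraic identity
  have key : (cableMu μ lam t u v) ^ ((N : ℤ) + p * q * (w + d)) *
      (cableLam μ lam t p q u v) ^ (w + d) =
      (μ ^ (q * w + (u + k')) * lam ^ (p * w + v)) * b ^ (N : ℤ) *
      (μ ^ (q * d - (u + k')) * lam ^ (p * d - v)) := by
    set M : G := cableMu μ lam t u v with hM
    have hLdef : cableLam μ lam t p q u v = M ^ (-(p * q)) * t ^ p := rfl
    have hL : (cableLam μ lam t p q u v) ^ (w + d) =
        M ^ (-(p * q) * (w + d)) * (t ^ p) ^ (w + d) := by
      rw [hLdef, (hcM.symm.zpow_left (-(p * q))).mul_zpow, ← zpow_mul]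
    have step1 : M ^ ((N : ℤ) + p * q * (w + d)) * (cableLam μ lam t p q u v) ^ (w + d)
        = M ^ (N : ℤ) * ((t ^ p) ^ w * (t ^ p) ^ d) := by
      rw [hL, ← mul_assoc, ← zpow_add]
      have he : (N : ℤ) + p * q * (w + d) + -(p * q) * (w + d) = (N : ℤ) := by ring
      rw [he, zpow_add]
    have hswap : M ^ (N : ℤ) * (t ^ p) ^ w = (t ^ p) ^ w * M ^ (N : ℤ) :=
      ((hcM.zpow_zpow w (N : ℤ)).symm).eq
    have htp : ∀ e : ℤ, (t ^ p) ^ e = μ ^ (q * e) * lam ^ (p * e) := by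
      intro e
      rw [ht, (h1.zpow_zpow q p).mul_zpow, ← zpow_mul, ← zpow_mul]
    have hMz : M ^ (N : ℤ) = g * b ^ (N : ℤ) * g⁻¹ := by
      rw [hMconj, conj_zpow]
    have hginv : g⁻¹ = μ ^ (-(u + k')) * lam ^ (-v) := by
      have : g = μ ^ (u + k') * lam ^ v := by
        rw [hgdef]
        have := merge_pows h1 u v k' 0
        simpa using this
      rw [this, mul_inv_rev, ← zpow_neg, ← zpow_neg, ((h1.zpow_zpow (-(u+k')) (-v)).symm).eq]
    have hgeq : g = μ ^ (u + k') * lam ^ v := by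
      rw [hgdef]
      have := merge_pows h1 u v k' 0
      simpa using this
    calc M ^ ((N : ℤ) + p * q * (w + d)) * (cableLam μ lam t p q u v) ^ (w + d)
        = M ^ (N : ℤ) * ((t ^ p) ^ w * (t ^ p) ^ d) := step1
      _ = (t ^ p) ^ w * M ^ (N : ℤ) * (t ^ p) ^ d := by
          rw [← mul_assoc, hswap]
      _ = (μ ^ (q * w) * lam ^ (p * w)) * (g * b ^ (N : ℤ) * g⁻¹) *
          (μ ^ (q * d) * lam ^ (p * d)) := by rw [htp, htp, hMz]
      _ = ((μ ^ (q * w) * lam ^ (p * w)) * (μ ^ (u + k') * lam ^ v)) * b ^ (N : ℤ) *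
          ((μ ^ (-(u + k')) * lam ^ (-v)) * (μ ^ (q * d) * lam ^ (p * d))) := by
          rw [hginv, hgeq]; group
      _ = (μ ^ (q * w + (u + k')) * lam ^ (p * w + v)) * b ^ (N : ℤ) *
          (μ ^ (q * d - (u + k')) * lam ^ (p * d - v)) := by
          rw [merge_pows h1, merge_pows h1]
          ring_nf
  rw [key]
  rcases Nat.eq_zero_or_pos N with hN | hN
  · subst hN
    simpa using hmul _ hX _ hY
  · have hbN : b ^ (N : ℤ) ∈ P := by
      rw [zpow_natCast]
      exact cone_pow_mem hmul hb N hN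
    exact hmul _ (hmul _ hX _ hbN) _ hY
end

section
/- Assume the cable setup. Suppose that μ^{−k} (t^{−v} μ^u λ^v) μ^k ∉ P for every natural number k ≥ 0, and that there exists a natural number k ≥ 0 such that (μ^{−k} t^{−v} μ^k)^{p−1} (μ^u λ^v)^{p−1} ∈ P. Then there exists a positive integer s such that μ_C^{N + pq(v+s)} λ_C^{v+s} ∈ P for every integer N ≥ 1. -/
set_option maxHeartbeats 1000000 in
/-- Cable setup: if `μ^{−k} (t^{−v} μ^u λ^v) μ^k ∉ P` for every natural `k` but
`(μ^{−k} t^{−v} μ^k)^{p−1} (μ^u λ^v)^{p−1} ∈ P` for some natural `k`, then there is a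
positive integer `s` with `μ_C^{N+pq(v+s)} λ_C^{v+s} ∈ P` for every integer `N ≥ 1`. -/
theorem stmt15 {G : Type*} [Group G] (P : Set G) (hP : IsPositiveCone P)
    (p q u v : ℤ) (hp : 0 < p) (hq : 0 < q) (hcop : IsCoprime p q)
    (hu : 0 < u) (hv : 0 < v) (huv : p * u - q * v = 1)
    (μ lam t : G) (hcomm : μ * lam = lam * μ) (ht : t ^ p = μ ^ q * lam ^ p)
    (r : ℚ) (hr : 0 < r) (hqp : r < (q : ℚ) / (p : ℚ))
    (hslopes : ∀ m n : ℤ, 0 < n → r < (m : ℚ) / (n : ℚ) → μ ^ m * lam ^ n ∈ P)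
    (hyp1 : ∀ k : ℕ, μ ^ (-(k : ℤ)) * (t ^ (-v) * μ ^ u * lam ^ v) * μ ^ (k : ℤ) ∉ P)
    (hyp2 : ∃ k : ℕ,
      (μ ^ (-(k : ℤ)) * t ^ (-v) * μ ^ (k : ℤ)) ^ (p - 1) * (μ ^ u * lam ^ v) ^ (p - 1) ∈ P) :
    ∃ s : ℤ, 0 < s ∧ ∀ N : ℤ, 1 ≤ N →
      (cableMu μ lam t u v) ^ (N + p * q * (v + s)) * (cableLam μ lam t p q u v) ^ (v + s) ∈ P := by
  obtain ⟨Pmul, Ptri, Pone, Pinv⟩ := hP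
  obtain ⟨k, hk⟩ := hyp2
  -- notation
  set K : ℤ := (k : ℤ) with hKdef
  have hK0 : (0 : ℤ) ≤ K := Int.natCast_nonneg k
  set A : G := μ ^ u * lam ^ v with hAdef
  set μC : G := μ ^ u * lam ^ v * t ^ (-v) with hμCdef
  -- commutation basics
  have cml : Commute μ lam := hcomm
  have czm : Commute (t ^ p) μ := by
    rw [ht]; exact ((Commute.refl μ).zpow_left q).mul_left (cml.symm.zpow_left p)
  have czl : Commute (t ^ p) lam := by
    rw [ht]; exact (cml.zpow_left q).mul_left ((Commute.refl lam).zpow_left p)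
  have czt : Commute (t ^ p) t := (Commute.refl t).zpow_left p
  have czc : Commute (t ^ p) μC := by
    rw [hμCdef]
    exact ((czm.zpow_right u).mul_right (czl.zpow_right v)).mul_right (czt.zpow_right (-v))
  have cza : Commute (t ^ p) A := by
    rw [hAdef]; exact (czm.zpow_right u).mul_right (czl.zpow_right v)
  have cam : Commute A μ := by
    rw [hAdef]; exact ((Commute.refl μ).zpow_left u).mul_left (cml.symm.zpow_left v)
  -- rational positivity of casts
  have hp' : (0 : ℚ) < (p : ℚ) := by exact_mod_cast hp
  have hv' : (0 : ℚ) < (v : ℚ) := by exact_mod_cast hv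
  have hrp : r * (p : ℚ) < (q : ℚ) := by
    rwa [lt_div_iff₀ hp'] at hqp
  have hrv : r * (v : ℚ) < (u : ℚ) := by
    -- from p*u = q*v + 1 and r*p < q
    have hpu : (p : ℚ) * u = q * v + 1 := by
      have : (p * u : ℤ) = q * v + 1 := by linarith
      exact_mod_cast this
    nlinarith [hrp, hv', hp', hr]
  -- membership helper
  have hmono : ∀ a b : ℤ, 0 < b → r * (b : ℚ) < (a : ℚ) → μ ^ a * lam ^ b ∈ P := by
    intro a b hb hab
    refine hslopes a b hb ?_
    rw [lt_div_iff₀ (by exact_mod_cast hb : (0 : ℚ) < (b : ℚ))]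
    exact hab
  -- lattice collection lemmas
  have hswap : ∀ a b : ℤ, lam ^ a * μ ^ b = μ ^ b * lam ^ a := fun a b =>
    (cml.symm.zpow_zpow a b).eq
  have hcollect : ∀ a b c d : ℤ,
      (μ ^ a * lam ^ b) * (μ ^ c * lam ^ d) = μ ^ (a + c) * lam ^ (b + d) := by
    intro a b c d
    calc (μ ^ a * lam ^ b) * (μ ^ c * lam ^ d)
        = μ ^ a * (lam ^ b * μ ^ c) * lam ^ d := by group
      _ = μ ^ a * (μ ^ c * lam ^ b) * lam ^ d := by rw [hswap]
      _ = (μ ^ a * μ ^ c) * (lam ^ b * lam ^ d) := by group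
      _ = μ ^ (a + c) * lam ^ (b + d) := by rw [← zpow_add, ← zpow_add]
  have hAj : ∀ j : ℤ, A ^ j = μ ^ (u * j) * lam ^ (v * j) := by
    intro j
    rw [hAdef, (cml.zpow_zpow u v).mul_zpow, zpow_mul, zpow_mul]
  have hζc : ∀ c : ℤ, (t ^ p) ^ c = μ ^ (q * c) * lam ^ (p * c) := by
    intro c
    rw [ht, (cml.zpow_zpow q p).mul_zpow, zpow_mul, zpow_mul]
  -- powers of positive elements
  have hpowmem : ∀ g : G, g ∈ P → ∀ N : ℤ, 1 ≤ N → g ^ N ∈ P := by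
    intro g hg N hN
    have hpos : ∀ n : ℕ, g ^ (n + 1) ∈ P := by
      intro n
      induction n with
      | zero => simpa using hg
      | succ n ih => rw [pow_succ]; exact Pmul _ ih _ hg
    have h1 : g ^ N = g ^ ((N.toNat - 1) + 1) := by
      rw [← zpow_natCast]
      congr 1
      omega
    rw [h1]; exact hpos _
  -- the conjugates
  set m : ℤ → G := fun j => (μ ^ K * A ^ j)⁻¹ * μC * (μ ^ K * A ^ j) with hmdef
  -- p = 1 : hyp2 is a direct contradiction
  by_cases hp1 : p = 1
  · exfalso
    rw [hp1] at hk
    simp only [sub_self, zpow_zero, one_mul] at hk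
    exact Pone hk
  have hp2 : 2 ≤ p := by omega
  -- key algebraic identity for inverses of m j
  set T : G := μ ^ (-K) * t ^ v * μ ^ K with hTdef
  have hminv : ∀ j : ℤ, (m j)⁻¹ = A ^ (-j) * T * A ^ (j - 1) := by
    intro j
    have h1 : (m j)⁻¹ = A ^ (-j) * μ ^ (-K) * μC⁻¹ * (μ ^ K * A ^ j) := by
      rw [hmdef]
      simp only [mul_inv_rev, inv_inv]
      rw [← zpow_neg, ← zpow_neg]
      group
    have h2 : μC⁻¹ = t ^ v * (lam ^ (-v) * μ ^ (-u)) := by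
      rw [hμCdef]
      simp only [mul_inv_rev]
      rw [← zpow_neg, ← zpow_neg, ← zpow_neg]
      group
    have h3 : (lam ^ (-v) * μ ^ (-u)) * μ ^ K = μ ^ K * (lam ^ (-v) * μ ^ (-u)) := by
      calc (lam ^ (-v) * μ ^ (-u)) * μ ^ K
          = lam ^ (-v) * (μ ^ (-u) * μ ^ K) := by group
        _ = lam ^ (-v) * (μ ^ K * μ ^ (-u)) := by rw [← zpow_add, ← zpow_add, add_comm]
        _ = (lam ^ (-v) * μ ^ K) * μ ^ (-u) := by group
        _ = (μ ^ K * lam ^ (-v)) * μ ^ (-u) := by rw [hswap]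
        _ = μ ^ K * (lam ^ (-v) * μ ^ (-u)) := by group
    have h4 : lam ^ (-v) * μ ^ (-u) = A⁻¹ := by
      rw [hAdef]; simp only [mul_inv_rev]; rw [← zpow_neg, ← zpow_neg]
    calc (m j)⁻¹ = A ^ (-j) * μ ^ (-K) * (t ^ v * (lam ^ (-v) * μ ^ (-u))) * (μ ^ K * A ^ j) := by
          rw [h1, h2]
      _ = A ^ (-j) * (μ ^ (-K) * t ^ v) * ((lam ^ (-v) * μ ^ (-u)) * μ ^ K) * A ^ j := by group
      _ = A ^ (-j) * (μ ^ (-K) * t ^ v) * (μ ^ K * (lam ^ (-v) * μ ^ (-u))) * A ^ j := by rw [h3]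
      _ = A ^ (-j) * T * (A⁻¹ * A ^ j) := by rw [h4, hTdef]; group
      _ = A ^ (-j) * T * A ^ (j - 1) := by
          congr 1
          rw [← zpow_neg_one, ← zpow_add]
          ring_nf
  by_cases Hex : ∃ j : ℤ, 1 ≤ j ∧ (m j ∈ P ∨ m j = 1)
  · -- some conjugate of μC is positive or trivial
    obtain ⟨j, hj1, hw⟩ := Hex
    have hj0 : (0 : ℚ) < (j : ℚ) := by exact_mod_cast lt_of_lt_of_le one_pos hj1
    rcases hw with hw | hw1
    · -- main case : m j ∈ P
      -- choose c₂
      have hqrp : (0 : ℚ) < (q : ℚ) - r * p := by linarith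
      obtain ⟨n₀, hn₀⟩ := exists_nat_gt (((j * u + K : ℤ) : ℚ) / ((q : ℚ) - r * p))
      set c₂ : ℤ := max (j * v + 1) (n₀ : ℤ) with hc₂def
      have hc₂₁ : j * v + 1 ≤ c₂ := le_max_left _ _
      have hc₂₂ : (n₀ : ℤ) ≤ c₂ := le_max_right _ _
      have hjv : v ≤ j * v := le_mul_of_one_le_left hv.le hj1
      have hc₂pos : 0 < c₂ := by omega
      have hkey : ((j * u + K : ℤ) : ℚ) < ((q : ℚ) - r * p) * (c₂ : ℚ) := by
        have h1 : ((j * u + K : ℤ) : ℚ) < ((q : ℚ) - r * p) * (n₀ : ℚ) := by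
          rw [div_lt_iff₀ hqrp] at hn₀
          linarith [hn₀]
        have h2 : ((q : ℚ) - r * p) * (n₀ : ℚ) ≤ ((q : ℚ) - r * p) * (c₂ : ℚ) := by
          apply mul_le_mul_of_nonneg_left _ hqrp.le
          exact_mod_cast hc₂₂
        linarith
      refine ⟨1 + c₂ - v, by omega, ?_⟩
      intro N hN
      set s : ℤ := 1 + c₂ - v with hsdef
      have hvs : v + s = 1 + c₂ := by omega
      -- set up pieces
      set Q : G := μ ^ K * A ^ j with hQdef
      have czq : Commute (t ^ p) Q := by
        rw [hQdef]; exact (czm.zpow_right K).mul_right (cza.zpow_right j)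
      -- the target element equals  (Q * t^p) * (m j)^N * (Q⁻¹ * (t^p)^c₂)
      have hgoal_eq :
          (cableMu μ lam t u v) ^ (N + p * q * (v + s)) * (cableLam μ lam t p q u v) ^ (v + s)
            = (Q * t ^ p) * (m j) ^ N * (Q⁻¹ * (t ^ p) ^ c₂) := by
        have hcm : cableMu μ lam t u v = μC := rfl
        have hcl : cableLam μ lam t p q u v = μC ^ (-(p * q)) * t ^ p := rfl
        have e1 : (μC ^ (-(p * q)) * t ^ p) ^ (v + s)
            = μC ^ (-(p * q) * (v + s)) * (t ^ p) ^ (v + s) := by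
          rw [((czc.symm.zpow_left (-(p * q)))).mul_zpow, ← zpow_mul]
        have e2 : μC ^ (N + p * q * (v + s)) * (μC ^ (-(p * q) * (v + s)) * (t ^ p) ^ (v + s))
            = μC ^ N * (t ^ p) ^ (v + s) := by
          rw [← mul_assoc, ← zpow_add]
          congr 2
          ring
        have e3 : (m j) ^ N = Q⁻¹ * μC ^ N * Q := by
          have : m j = Q⁻¹ * μC * (Q⁻¹)⁻¹ := by rw [hmdef, inv_inv, hQdef]
          rw [this, conj_zpow, inv_inv]
        have e4 : (Q * t ^ p) * (Q⁻¹ * μC ^ N * Q) * (Q⁻¹ * (t ^ p) ^ c₂)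
            = μC ^ N * (t ^ p) ^ (v + s) := by
          have hQζ : Q * t ^ p = t ^ p * Q := (czq.eq).symm
          have hζμCN : t ^ p * μC ^ N = μC ^ N * t ^ p := ((czc.zpow_right N).eq)
          calc (Q * t ^ p) * (Q⁻¹ * μC ^ N * Q) * (Q⁻¹ * (t ^ p) ^ c₂)
              = (t ^ p * Q) * (Q⁻¹ * μC ^ N * Q) * (Q⁻¹ * (t ^ p) ^ c₂) := by rw [hQζ]
            _ = t ^ p * μC ^ N * (t ^ p) ^ c₂ := by group
            _ = μC ^ N * (t ^ p * (t ^ p) ^ c₂) := by rw [hζμCN]; group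
            _ = μC ^ N * (t ^ p) ^ (v + s) := by
                congr 1
                rw [hvs, zpow_add, zpow_one]
        rw [hcm, hcl, e1, e2, e3, e4]
      rw [hgoal_eq]
      -- memberships
      have hL1 : Q * t ^ p ∈ P := by
        have hform : Q * t ^ p = μ ^ (K + (u * j + q * 1)) * lam ^ (v * j + p * 1) := by
          rw [hQdef, ht, hAj j]
          calc μ ^ K * (μ ^ (u * j) * lam ^ (v * j)) * (μ ^ q * lam ^ p)
              = μ ^ K * ((μ ^ (u * j) * lam ^ (v * j)) * (μ ^ q * lam ^ p)) := by group
            _ = μ ^ K * (μ ^ (u * j + q) * lam ^ (v * j + p)) := by rw [hcollect]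
            _ = (μ ^ K * μ ^ (u * j + q)) * lam ^ (v * j + p) := by group
            _ = μ ^ (K + (u * j + q * 1)) * lam ^ (v * j + p * 1) := by
                rw [← zpow_add]; ring_nf
        rw [hform]
        apply hmono
        · have hjpos : (0:ℤ) < j := lt_of_lt_of_le one_pos hj1
          nlinarith [mul_pos hv hjpos]
        · push_cast
          have h1 : r * ((v : ℚ) * j) < (u : ℚ) * j := by
            have := mul_lt_mul_of_pos_right hrv hj0
            nlinarith [this]
          have hK0' : (0 : ℚ) ≤ (K : ℚ) := by exact_mod_cast hK0
          nlinarith [hrp, h1, hK0']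
      have hL2 : Q⁻¹ * (t ^ p) ^ c₂ ∈ P := by
        have hform : Q⁻¹ * (t ^ p) ^ c₂
            = μ ^ (u * (-j) + -K + q * c₂) * lam ^ (v * (-j) + p * c₂) := by
          rw [hQdef, hζc c₂]
          have hQi : (μ ^ K * A ^ j)⁻¹ = A ^ (-j) * μ ^ (-K) := by
            simp only [mul_inv_rev]; rw [← zpow_neg, ← zpow_neg]
          rw [hQi, hAj (-j)]
          calc μ ^ (u * (-j)) * lam ^ (v * (-j)) * μ ^ (-K) * (μ ^ (q * c₂) * lam ^ (p * c₂))
              = μ ^ (u * (-j)) * (lam ^ (v * (-j)) * μ ^ (-K)) * (μ ^ (q * c₂) * lam ^ (p * c₂)) := by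
                group
            _ = μ ^ (u * (-j)) * (μ ^ (-K) * lam ^ (v * (-j))) * (μ ^ (q * c₂) * lam ^ (p * c₂)) := by
                rw [hswap]
            _ = (μ ^ (u * (-j)) * μ ^ (-K)) * (lam ^ (v * (-j)) * (μ ^ (q * c₂) * lam ^ (p * c₂))) := by
                group
            _ = (μ ^ (u * (-j)) * μ ^ (-K)) * ((lam ^ (v * (-j)) * μ ^ (q * c₂)) * lam ^ (p * c₂)) := by
                group
            _ = (μ ^ (u * (-j)) * μ ^ (-K)) * ((μ ^ (q * c₂) * lam ^ (v * (-j))) * lam ^ (p * c₂)) := by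
                rw [hswap]
            _ = (μ ^ (u * (-j)) * μ ^ (-K) * μ ^ (q * c₂)) * (lam ^ (v * (-j)) * lam ^ (p * c₂)) := by
                group
            _ = μ ^ (u * (-j) + -K + q * c₂) * lam ^ (v * (-j) + p * c₂) := by
                rw [← zpow_add, ← zpow_add, ← zpow_add]
        rw [hform]
        apply hmono
        · have hpc : c₂ ≤ p * c₂ := le_mul_of_one_le_left hc₂pos.le (by omega)
          nlinarith [hjv]
        · push_cast
          have h0 : (0 : ℚ) ≤ r * ((v : ℚ) * j) :=
            mul_nonneg hr.le (mul_nonneg hv'.le hj0.le)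
          have hkey' : ((j : ℚ) * u + K) < ((q : ℚ) - r * p) * c₂ := by
            have h := hkey; push_cast at h; linarith
          nlinarith [hkey', h0]
      exact Pmul _ (Pmul _ hL1 _ (hpowmem _ hw N hN)) _ hL2
    · -- m j = 1 : then μC = 1
      have hμC1 : μC = 1 := by
        have h : (μ ^ K * A ^ j) * (m j) * (μ ^ K * A ^ j)⁻¹ = μC := by
          rw [hmdef]; group
        rw [← h, hw1]; group
      refine ⟨1, one_pos, ?_⟩
      intro N hN
      have hcm : cableMu μ lam t u v = μC := rfl
      have hcl : cableLam μ lam t p q u v = μC ^ (-(p * q)) * t ^ p := rfl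
      rw [hcm, hcl, hμC1]
      simp only [one_zpow, one_mul]
      rw [hζc (v + 1)]
      apply hmono
      · nlinarith
      · push_cast
        have hv1 : (0 : ℚ) < (v : ℚ) + 1 := by linarith
        nlinarith [hrp]
  · -- all the conjugates m j (j ≥ 1) have inverse in P ⟹ contradiction with hyp2
    exfalso
    push_neg at Hex
    have hψ : ∀ j : ℤ, 1 ≤ j → (m j)⁻¹ ∈ P := by
      intro j hj
      rcases Ptri (m j) with h | h | h
      · exact absurd h ((Hex j hj).1)
      · exact absurd h ((Hex j hj).2)
      · exact h
    -- telescoping product  S n = A^(-n) * T^n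
    have hS : ∀ n : ℕ, 1 ≤ n → A ^ (-(n : ℤ)) * T ^ (n : ℤ) ∈ P := by
      intro n hn
      induction n with
      | zero => omega
      | succ n ih =>
        rcases Nat.lt_or_ge 1 (n + 1) with h1 | h1
        · have hn1 : 1 ≤ n := by omega
          have hstep : A ^ (-((n : ℤ) + 1)) * T ^ ((n : ℤ) + 1)
              = (m ((n : ℤ) + 1))⁻¹ * (A ^ (-(n : ℤ)) * T ^ (n : ℤ)) := by
            rw [hminv]
            have : ((n : ℤ) + 1 - 1) = (n : ℤ) := by ring
            rw [this]
            group
          have : ((n + 1 : ℕ) : ℤ) = (n : ℤ) + 1 := by push_cast; ring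
          rw [this, hstep]
          exact Pmul _ (hψ _ (by omega)) _ (ih hn1)
        · have hn0 : n = 0 := by omega
          subst hn0
          have : ((1 : ℕ) : ℤ) = (1 : ℤ) := by norm_num
          rw [this]
          have h1' : A ^ (-(1 : ℤ)) * T ^ (1 : ℤ) = (m 1)⁻¹ := by
            rw [hminv]
            norm_num
          rw [h1']
          exact hψ 1 le_rfl
    -- identify with the inverse of the hyp2 element
    have hE : ((μ ^ (-K) * t ^ (-v) * μ ^ K) ^ (p - 1) * A ^ (p - 1))⁻¹
        = A ^ (-(p - 1)) * T ^ (p - 1) := by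
      have hD : (μ ^ (-K) * t ^ (-v) * μ ^ K)⁻¹ = T := by
        rw [hTdef]
        simp only [mul_inv_rev, inv_inv]
        rw [← zpow_neg, ← zpow_neg, ← zpow_neg]
        group
      rw [mul_inv_rev, ← zpow_neg, ← inv_zpow, hD]
    have hmem : A ^ (-(p - 1)) * T ^ (p - 1) ∈ P := by
      have hcast : (((p - 1).toNat : ℤ)) = p - 1 := Int.toNat_of_nonneg (by omega)
      have := hS (p - 1).toNat (by omega)
      rwa [hcast] at this
    rw [← hE] at hmem
    exact Pinv _ hk hmem
end

section
/- Let G be a group and let μ, λ, t ∈ G satisfy μλ = λμ and t^p = μ^q λ^p, where p, q, u, v are integers with pu − qv = 1, and set μ_C = μ^u λ^v t^{−v}. Then for all integers k and s and every natural number N ≥ 0, μ_C^N t^{ps} = μ^{u+k} λ^v · (μ^{−k} (t^{−v} μ^u λ^v)^N μ^k) · μ^{qs−u−k} λ^{ps−v}. -/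
private lemma mulml {G : Type*} [Group G] {μ lam : G} (hcomm : μ * lam = lam * μ)
    (a b c d : ℤ) : (μ ^ a * lam ^ b) * (μ ^ c * lam ^ d) = μ ^ (a + c) * lam ^ (b + d) := by
  have h : Commute μ lam := hcomm
  have h2 : Commute (lam ^ b) (μ ^ c) := (h.symm.zpow_zpow b c)
  calc (μ ^ a * lam ^ b) * (μ ^ c * lam ^ d)
      = μ ^ a * (lam ^ b * μ ^ c) * lam ^ d := by group
    _ = μ ^ a * (μ ^ c * lam ^ b) * lam ^ d := by rw [h2.eq]
    _ = μ ^ (a + c) * lam ^ (b + d) := by rw [zpow_add, zpow_add]; group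

/-- The rewriting identity used in the first cabling lemma: for all integers `k, s` and
naturals `N`, `μ_C^N t^{ps} = μ^{u+k} λ^v (μ^{−k} (t^{−v} μ^u λ^v)^N μ^k) μ^{qs−u−k} λ^{ps−v}`. -/
theorem stmt16 {G : Type*} [Group G] (μ lam t : G) (hcomm : μ * lam = lam * μ)
    (p q u v : ℤ) (huv : p * u - q * v = 1) (ht : t ^ p = μ ^ q * lam ^ p)
    (k s : ℤ) (N : ℕ) :
    (cableMu μ lam t u v) ^ (N : ℤ) * t ^ (p * s)
      = μ ^ (u + k) * lam ^ v
        * (μ ^ (-k) * (t ^ (-v) * μ ^ u * lam ^ v) ^ (N : ℤ) * μ ^ k)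
        * (μ ^ (q * s - u - k) * lam ^ (p * s - v)) := by
  have hml : Commute μ lam := hcomm
  set Y := (t ^ (-v) * μ ^ u * lam ^ v) ^ (N : ℤ) with hY
  -- t^(p*s) = μ^(q*s) * lam^(p*s)
  have hts : t ^ (p * s) = μ ^ (q * s) * lam ^ (p * s) := by
    rw [zpow_mul, ht, (hml.zpow_zpow q p).mul_zpow, ← zpow_mul, ← zpow_mul,
      mul_comm q s, mul_comm p s, mul_comm s q, mul_comm s p]
  -- conjugation identity
  have hconj : (cableMu μ lam t u v) ^ (N : ℤ)
      = (μ ^ u * lam ^ v) * Y * (μ ^ u * lam ^ v)⁻¹ := by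
    rw [hY, ← conj_zpow]
    congr 1
    unfold cableMu
    group
  rw [hconj, hts]
  -- RHS simplification
  have hR : μ ^ (u + k) * lam ^ v * (μ ^ (-k) * Y * μ ^ k)
        * (μ ^ (q * s - u - k) * lam ^ (p * s - v))
      = (μ ^ u * lam ^ v) * Y * (μ ^ (q * s - u) * lam ^ (p * s - v)) := by
    have e1 : μ ^ (u + k) * lam ^ v * μ ^ (-k) = μ ^ u * lam ^ v := by
      have := mulml hcomm (u + k) v (-k) 0
      simpa using this
    have e2 : μ ^ k * (μ ^ (q * s - u - k) * lam ^ (p * s - v))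
        = μ ^ (q * s - u) * lam ^ (p * s - v) := by
      have h := mulml hcomm k 0 (q * s - u - k) (p * s - v)
      simp only [zpow_zero, mul_one, zero_add] at h
      rw [h, show k + (q * s - u - k) = q * s - u from by ring]
    calc μ ^ (u + k) * lam ^ v * (μ ^ (-k) * Y * μ ^ k)
          * (μ ^ (q * s - u - k) * lam ^ (p * s - v))
        = (μ ^ (u + k) * lam ^ v * μ ^ (-k)) * Y
            * (μ ^ k * (μ ^ (q * s - u - k) * lam ^ (p * s - v))) := by group
      _ = (μ ^ u * lam ^ v) * Y * (μ ^ (q * s - u) * lam ^ (p * s - v)) := by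
          rw [e1, e2]
  rw [hR]
  -- LHS simplification
  have e3 : (μ ^ u * lam ^ v)⁻¹ * (μ ^ (q * s) * lam ^ (p * s))
      = μ ^ (q * s - u) * lam ^ (p * s - v) := by
    have hinv : (μ ^ u * lam ^ v)⁻¹ = μ ^ (-u) * lam ^ (-v) := by
      rw [(hml.zpow_zpow (-u) (-v)).eq]; group
    rw [hinv, mulml hcomm, show -u + q * s = q * s - u from by ring,
      show -v + p * s = p * s - v from by ring]
  calc (μ ^ u * lam ^ v) * Y * (μ ^ u * lam ^ v)⁻¹ * (μ ^ (q * s) * lam ^ (p * s))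
      = (μ ^ u * lam ^ v) * Y * ((μ ^ u * lam ^ v)⁻¹ * (μ ^ (q * s) * lam ^ (p * s))) := by
        group
    _ = (μ ^ u * lam ^ v) * Y * (μ ^ (q * s - u) * lam ^ (p * s - v)) := by rw [e3]
end
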